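/- Let p be a prime with p ≥ 5 and α a positive integer with α ≤ p - 3. If α is odd, then Σ_{1 ≤ l < 2p, l ≠ p} 1/l^α ≡ 2·Σ_{1 ≤ l < p} 1/l^α - α·p·Σ_{1 ≤ l < p} 1/l^(α+1) (mod p³), with all inverses computed in ℤ/p³ℤ. -/

import Mathlib

/-!
Write `l = p + k` for the terms with `p < l < 2p`. Since `p³ = 0` in `ℤ/p³ℤ`, the inverse of
`(p + k)^α` is the second-order expansion `k^{-α} - α p k^{-α-1} + C(α+1, 2) p² k^{-α-2}`.
Summing over `1 ≤ k < p`, the first two terms give the right-hand side, and the last one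
vanishes because `∑ k^{-(α+2)} ≡ 0 (mod p)`: the power sum `∑_{u ∈ 𝔽_p^×} u^m` is zero
unless `p - 1 ∣ m`, and `0 < α + 2 < p - 1` as `α` and `p` are odd.
-/

open Finset

section CubeZero

variable {R : Type*} [CommRing R] {P x u : R}

/-- The expansion of `(x + P)^{-a}` modulo `P³`, with `u` an inverse of `x`. -/
def invPowCubeTrunc (P u : R) (a : ℕ) : R :=
  u ^ a - a * P * u ^ (a + 1) + (a + 1).choose 2 * P ^ 2 * u ^ (a + 2)

theorem add_mul_invPowCubeTrunc_succ (hP : P ^ 3 = 0) (hxu : x * u = 1) (a : ℕ) :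
    (P + x) * invPowCubeTrunc P u (a + 1) = invPowCubeTrunc P u a := by
  have hchoose : (((a + 2).choose 2 : ℕ) : R) = ((a + 1).choose 2 : ℕ) + (a + 1) := by
    rw [Nat.choose_succ_succ (a + 1) 1, Nat.choose_one_right]
    push_cast; ring
  simp only [invPowCubeTrunc, hchoose]
  push_cast
  linear_combination (u ^ a + (-(a : R) - 1) * P * u ^ (a + 1)
      + (((a + 1).choose 2 : ℕ) + a + 1) * P ^ 2 * u ^ (a + 2)) * hxu
    + (((a + 1).choose 2 : ℕ) + a + 1) * u ^ (a + 3) * hP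

theorem add_pow_mul_invPowCubeTrunc (hP : P ^ 3 = 0) (hxu : x * u = 1) (a : ℕ) :
    (P + x) ^ a * invPowCubeTrunc P u a = 1 := by
  induction a with
  | zero => simp [invPowCubeTrunc]
  | succ a ih =>
    rw [pow_succ, mul_assoc, add_mul_invPowCubeTrunc_succ hP hxu, ih]

end CubeZero

namespace ZMod

variable {n : ℕ}

theorem inv_pow_of_isUnit {a : ZMod n} (ha : IsUnit a) (m : ℕ) : (a ^ m)⁻¹ = a⁻¹ ^ m :=
  ZMod.inv_eq_of_mul_eq_one _ _ _ (by rw [← mul_pow, mul_inv_of_unit a ha, one_pow])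

theorem map_inv_of_isUnit {m : ℕ} (f : ZMod n →+* ZMod m) {a : ZMod n} (ha : IsUnit a) :
    f a⁻¹ = (f a)⁻¹ :=
  (ZMod.inv_eq_of_mul_eq_one _ _ _ (by rw [← map_mul, mul_inv_of_unit a ha, map_one])).symm

theorem inv_add_pow_of_pow_three_eq_zero {P x : ZMod n} (hP : P ^ 3 = 0) (hx : IsUnit x)
    (a : ℕ) :
    ((P + x) ^ a)⁻¹ = (x ^ a)⁻¹ - a * P * (x ^ (a + 1))⁻¹
      + (a + 1).choose 2 * P ^ 2 * (x ^ (a + 2))⁻¹ := by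
  rw [inv_pow_of_isUnit hx, inv_pow_of_isUnit hx, inv_pow_of_isUnit hx]
  exact ZMod.inv_eq_of_mul_eq_one _ _ _
    (add_pow_mul_invPowCubeTrunc hP (mul_inv_of_unit x hx) a)

theorem natCast_mul_eq_zero_of_castHom_eq_zero {p q : ℕ} (hn : n ∣ p * q) (hp : p ∣ n)
    {y : ZMod n} (hy : castHom hp (ZMod p) y = 0) : (q : ZMod n) * y = 0 := by
  obtain ⟨z, rfl⟩ := intCast_surjective y
  rw [map_intCast, intCast_zmod_eq_zero_iff_dvd] at hy
  obtain ⟨m, rfl⟩ := hy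
  rw [← Int.cast_natCast, ← Int.cast_mul, intCast_zmod_eq_zero_iff_dvd]
  exact (Int.natCast_dvd_natCast.mpr hn).trans ⟨m, by push_cast; ring⟩

variable {p : ℕ} [Fact p.Prime]

theorem sum_Ico_one_eq_sum_units {M : Type*} [AddCommMonoid M] (f : ZMod p → M) :
    ∑ v ∈ Ico 1 p, f v = ∑ u : (ZMod p)ˣ, f u := by
  have hne : ∀ v ∈ Ico 1 p, (v : ZMod p) ≠ 0 := fun v hv => by
    rw [Ne, natCast_eq_zero_iff]
    exact Nat.not_dvd_of_pos_of_lt (mem_Ico.mp hv).1 (mem_Ico.mp hv).2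
  refine sum_bij' (fun v hv => Units.mk0 (v : ZMod p) (hne v hv)) (fun u _ => (u : ZMod p).val)
    (fun _ _ => mem_univ _) (fun u _ => ?_) (fun v hv => ?_) (fun u _ => ?_) (fun _ _ => rfl)
  · have := (val_ne_zero (u : ZMod p)).mpr u.ne_zero
    have := val_lt (u : ZMod p)
    exact mem_Ico.mpr ⟨by omega, by omega⟩
  · exact val_cast_of_lt (mem_Ico.mp hv).2
  · exact Units.ext (natCast_zmod_val _)

theorem sum_Ico_inv_pow_eq_zero {m : ℕ} (hm : ¬ p - 1 ∣ m) :
    ∑ v ∈ Ico 1 p, ((v : ZMod p) ^ m)⁻¹ = 0 := by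
  classical
  rw [sum_Ico_one_eq_sum_units (fun x => (x ^ m)⁻¹)]
  simp only [← inv_pow, ← Units.val_inv_eq_inv_val]
  refine (Fintype.sum_bijective _ inv_involutive.bijective _
    (fun u : (ZMod p)ˣ => (u : ZMod p) ^ m) fun _ => rfl).trans ?_
  rw [FiniteField.sum_pow_units, card, if_neg hm]

theorem isUnit_natCast_pow_of_mem_Ico {k : ℕ} (hk : k ∈ Ico 1 p) (e : ℕ) :
    IsUnit (k : ZMod (p ^ e)) :=
  (isUnit_iff_coprime k _).mpr <| Nat.Coprime.pow_right e <|
    (Nat.coprime_of_lt_prime (by grind) (mem_Ico.mp hk).2 Fact.out).symm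

theorem pow_mul_sum_Ico_inv_pow_eq_zero (e : ℕ) {m : ℕ} (hm : ¬ p - 1 ∣ m) :
    (p : ZMod (p ^ (e + 1))) ^ e * ∑ k ∈ Ico 1 p, ((k : ZMod (p ^ (e + 1))) ^ m)⁻¹ = 0 := by
  rw [← Nat.cast_pow]
  refine natCast_mul_eq_zero_of_castHom_eq_zero (pow_succ' p e).dvd
    (dvd_pow_self p e.succ_ne_zero) ?_
  rw [map_sum, ← sum_Ico_inv_pow_eq_zero hm]
  refine sum_congr rfl fun k hk => ?_
  rw [map_inv_of_isUnit _ ((isUnit_natCast_pow_of_mem_Ico hk _).pow _), map_pow, map_natCast]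

end ZMod

theorem sum_Ico_two_mul_filter_ne {M : Type*} [AddCommMonoid M] (f : ℕ → M) (p : ℕ) :
    ∑ l ∈ (Ico 1 (2 * p)).filter (fun l => l ≠ p), f l
      = ∑ k ∈ Ico 1 p, f k + ∑ k ∈ Ico 1 p, f (p + k) := by
  have hsplit : (Ico 1 (2 * p)).filter (fun l => l ≠ p) = Ico 1 p ∪ Ico (1 + p) (p + p) := by
    ext l
    simp only [mem_filter, mem_union, mem_Ico]
    omega
  rw [hsplit, sum_union (Ico_disjoint_Ico_consecutive 1 p (p + p) |>.mono_right
    (Ico_subset_Ico_left (by omega))), sum_Ico_add]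

theorem stmt12_general (p α : ℕ) (hp : p.Prime) (hp5 : 5 ≤ p) (hαp : α ≤ p - 3)
    (hodd : Odd α) :
    (∑ l ∈ (Finset.Ico 1 (2 * p)).filter (fun l => l ≠ p),
      ((l : ZMod (p ^ 3)) ^ α)⁻¹) =
    2 * (∑ l ∈ Finset.Ico 1 p, ((l : ZMod (p ^ 3)) ^ α)⁻¹)
      - (α : ZMod (p ^ 3)) * p * (∑ l ∈ Finset.Ico 1 p, ((l : ZMod (p ^ 3)) ^ (α + 1))⁻¹) := by
  have := Fact.mk hp
  have hα : α + 4 ≤ p := by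
    have := Nat.odd_iff.mp (hp.odd_of_ne_two (by omega))
    have := Nat.odd_iff.mp hodd
    omega
  have hP : (p : ZMod (p ^ 3)) ^ 3 = 0 := by exact_mod_cast ZMod.natCast_self (p ^ 3)
  have hvanish :
      (p : ZMod (p ^ 3)) ^ 2 * ∑ k ∈ Ico 1 p, ((k : ZMod (p ^ 3)) ^ (α + 2))⁻¹ = 0 :=
    ZMod.pow_mul_sum_Ico_inv_pow_eq_zero 2 (Nat.not_dvd_of_pos_of_lt (by omega) (by omega))
  have hexpand : ∀ k ∈ Ico 1 p, (((p + k : ℕ) : ZMod (p ^ 3)) ^ α)⁻¹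
      = ((k : ZMod (p ^ 3)) ^ α)⁻¹ - α * p * ((k : ZMod (p ^ 3)) ^ (α + 1))⁻¹
        + (α + 1).choose 2 * (p : ZMod (p ^ 3)) ^ 2 * ((k : ZMod (p ^ 3)) ^ (α + 2))⁻¹ :=
    fun k hk => by
      rw [Nat.cast_add]
      exact ZMod.inv_add_pow_of_pow_three_eq_zero hP (ZMod.isUnit_natCast_pow_of_mem_Ico hk _) α
  rw [sum_Ico_two_mul_filter_ne, sum_congr rfl hexpand]
  simp only [sum_add_distrib, sum_sub_distrib, ← mul_sum]
  linear_combination ((α + 1).choose 2 : ZMod (p ^ 3)) * hvanish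

theorem stmt12 (p α : ℕ) (hp : p.Prime) (hp5 : 5 ≤ p) (hα : 1 ≤ α) (hαp : α ≤ p - 3)
    (hodd : Odd α) :
    (∑ l ∈ (Finset.Ico 1 (2 * p)).filter (fun l => l ≠ p),
      ((l : ZMod (p ^ 3)) ^ α)⁻¹) =
    2 * (∑ l ∈ Finset.Ico 1 p, ((l : ZMod (p ^ 3)) ^ α)⁻¹)
      - (α : ZMod (p ^ 3)) * p * (∑ l ∈ Finset.Ico 1 p, ((l : ZMod (p ^ 3)) ^ (α + 1))⁻¹) :=
  stmt12_general p α hp hp5 hαp hodd
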